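/- Every group of prime exponent is Z_mon-cofinite. Moreover, every infinite Z_mon-cofinite group is either almost torsion-free or has prime exponent. -/

import Mathlib

/-!
If `x ^ p = 1` identically, then `x ↦ x ^ n` is constant when `p ∣ n` and bijective otherwise,
so every root set is empty, finite or everything.

Conversely, in a `Z_mon`-cofinite group an infinite root set `{x | x ^ n = g}` is all of `G`,
which forces `g = 1 ^ n = 1`. So if some socle `G[n]` is infinite, `G` has a finite exponent `e`.
For a prime `p ∣ e`, the socle `G[e / p]` is not all of `G` by minimality of `e`, hence finite;
the `p`-th power map sends the infinite group `G` into it, so one of its fibres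
`{x | x ^ p = y}` is infinite, and then `x ^ p = 1` for all `x`.
-/

/-- `G` is `Z_mon`-cofinite: for every `n ≥ 1` and `g ∈ G`, the set of `n`-th roots of `g`
is either finite or all of `G`. -/
def ZmonCofinite (G : Type*) [Group G] : Prop :=
  ∀ n : ℕ, 1 ≤ n → ∀ g : G,
    {x : G | x ^ n = g}.Finite ∨ {x : G | x ^ n = g} = Set.univ

/-- `G` satisfies the weak cancellation law: for every `n ≥ 1` the map `x ↦ x^n`
is finitely-many-to-one. -/
def WCL (G : Type*) [Group G] : Prop :=
  ∀ n : ℕ, 1 ≤ n → ∀ a : G, {x : G | x ^ n = a}.Finite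

/-- `G` is almost torsion-free: every `n`-socle `G[n]` is finite. -/
def AlmostTorsionFree (G : Type*) [Group G] : Prop :=
  ∀ n : ℕ, 1 ≤ n → {x : G | x ^ n = 1}.Finite

/-- `G` has prime exponent. -/
def HasPrimeExponent (G : Type*) [Group G] : Prop :=
  ∃ p : ℕ, p.Prime ∧ ∀ x : G, x ^ p = 1

theorem ZmonCofinite.of_hasPrimeExponent {G : Type*} [Group G] (h : HasPrimeExponent G) :
    ZmonCofinite G := by
  obtain ⟨p, hp, hG⟩ := h
  intro n _ g
  by_cases hpn : p ∣ n
  · have hpow : ∀ x : G, x ^ n = 1 := fun x => by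
      obtain ⟨k, rfl⟩ := hpn
      rw [pow_mul, hG, one_pow]
    rcases eq_or_ne g 1 with rfl | hg
    · exact Or.inr (Set.eq_univ_of_forall hpow)
    · exact Or.inl (Set.finite_empty.subset fun x (hx : x ^ n = g) => hg (hx ▸ hpow x))
  · have hpG : IsPGroup p G := fun x => ⟨1, by rw [pow_one, hG]⟩
    have hinj := (hpG.powEquiv (hp.coprime_iff_not_dvd.2 hpn)).injective
    exact Or.inl (Set.Subsingleton.finite fun x hx y hy => hinj (hx.trans hy.symm))

namespace ZmonCofinite

variable {G : Type*} [Group G]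

theorem pow_eq_one_of_infinite (hZ : ZmonCofinite G) {n : ℕ} (hn : 1 ≤ n) {g : G}
    (hg : {x : G | x ^ n = g}.Infinite) (x : G) : x ^ n = 1 := by
  have hroots := (hZ n hn g).resolve_left hg
  have hx : ∀ y : G, y ^ n = g := fun y => Set.eq_univ_iff_forall.mp hroots y
  rw [hx, ← hx 1, one_pow]

theorem exponentExists_of_not_almostTorsionFree (hZ : ZmonCofinite G)
    (h : ¬ AlmostTorsionFree G) : Monoid.ExponentExists G := by
  simp only [AlmostTorsionFree, not_forall] at h
  obtain ⟨n, hn, hsocle⟩ := h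
  exact ⟨n, hn, hZ.pow_eq_one_of_infinite hn hsocle⟩

theorem hasPrimeExponent_of_exponentExists [Infinite G] (hZ : ZmonCofinite G)
    (hE : Monoid.ExponentExists G) : HasPrimeExponent G := by
  have he : 0 < Monoid.exponent G := hE.exponent_pos
  have he1 : Monoid.exponent G ≠ 1 := fun h =>
    not_subsingleton G (Monoid.exp_eq_one_iff.mp h)
  obtain ⟨p, hp, m, hm⟩ := Nat.exists_prime_and_dvd he1
  have hm0 : 0 < m := Nat.pos_of_mul_pos_left (hm ▸ he)
  have hsocle : {x : G | x ^ m = 1}.Finite := by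
    by_contra hinf
    have hdvd := Monoid.exponent_dvd_of_forall_pow_eq_one (hZ.pow_eq_one_of_infinite hm0 hinf)
    have hlt : m < Monoid.exponent G := hm ▸ lt_mul_left hm0 hp.one_lt
    exact absurd (Nat.le_of_dvd hm0 hdvd) hlt.not_ge
  obtain ⟨y, -, hy⟩ : ∃ y ∈ {x : G | x ^ m = 1}, {x : G | x ^ p = y}.Infinite := by
    by_contra! hfin
    refine Set.infinite_univ ((hsocle.biUnion hfin).subset fun x _ => ?_)
    refine Set.mem_biUnion (x := x ^ p) ?_ rfl
    show (x ^ p) ^ m = 1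
    rw [← pow_mul, ← hm, Monoid.pow_exponent_eq_one]
  exact ⟨p, hp, hZ.pow_eq_one_of_infinite hp.one_le hy⟩

end ZmonCofinite

/-- Every group of prime exponent is `Z_mon`-cofinite; moreover every infinite
`Z_mon`-cofinite group is either almost torsion-free or has prime exponent. -/
theorem stmt_2 :
    (∀ (G : Type u) [Group G], HasPrimeExponent G → ZmonCofinite G) ∧
    (∀ (G : Type u) [Group G], Infinite G → ZmonCofinite G →
      AlmostTorsionFree G ∨ HasPrimeExponent G) := by
  refine ⟨fun G _ => ZmonCofinite.of_hasPrimeExponent, fun G _ _ hZ => ?_⟩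
  by_cases hA : AlmostTorsionFree G
  · exact Or.inl hA
  · exact Or.inr (hZ.hasPrimeExponent_of_exponentExists
      (hZ.exponentExists_of_not_almostTorsionFree hA))
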